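/- arXiv:1605.08203 — 3 statements merged into one kernel-verified Lean document; each statement's English description precedes it below -/
import Mathlib

section
/- On the holomorphic tangent bundle T'E of a holomorphic Lie algebroid E, the map Υ = p′_* ∘ ρ_*, where ρ_* is the tangent map of the anchor and p′_* the tangent map of the projection T'M → M, satisfies [Z, fW]_{T'E} = f[Z,W]_{T'E} + (Υ(Z)f)·W for all sections Z,W of T'E over M and functions f on M. Consequently T'E carries a Lie algebroid structure over M with anchor Υ. -/
open scoped BigOperators

noncomputable section

/-- Total space of the bundle `E`, in local coordinates `(z, u) ∈ ℂⁿ × ℂᵐ`. -/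
abbrev TotE (n m : ℕ) := (Fin n → ℂ) × (Fin m → ℂ)

/-- `∂f/∂zʲ` on the total space. -/
def pdz {n m : ℕ} (j : Fin n) (f : TotE n m → ℂ) (p : TotE n m) : ℂ :=
  fderiv ℂ f p (Pi.single j 1, 0)

/-- `∂f/∂u^β` on the total space. -/
def pdu {n m : ℕ} (β : Fin m) (f : TotE n m → ℂ) (p : TotE n m) : ℂ :=
  fderiv ℂ f p (0, Pi.single β 1)

/-- `∂f/∂zᵏ` on the base. -/
def pd {n : ℕ} (k : Fin n) (f : (Fin n → ℂ) → ℂ) (z : Fin n → ℂ) : ℂ :=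
  fderiv ℂ f z (Pi.single k 1)

/-- A (holomorphic) vector field on the total space `E`, through its components. -/
structure VFE (n m : ℕ) where
  z : Fin n → TotE n m → ℂ
  u : Fin m → TotE n m → ℂ

/-- Action of a vector field on a function. -/
def act {n m : ℕ} (X : VFE n m) (f : TotE n m → ℂ) (p : TotE n m) : ℂ :=
  ∑ j, X.z j p * pdz j f p + ∑ β, X.u β p * pdu β f p

/-- `z`-components of the Lie bracket `[X,Y]`. -/
def brkz {n m : ℕ} (X Y : VFE n m) (i : Fin n) (p : TotE n m) : ℂ :=
  act X (Y.z i) p - act Y (X.z i) p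

/-- `u`-components of the Lie bracket `[X,Y]`. -/
def brku {n m : ℕ} (X Y : VFE n m) (α : Fin m) (p : TotE n m) : ℂ :=
  act X (Y.u α) p - act Y (X.u α) p

/-!
A function pulled back from the base is constant along the fibres, so its `u`-derivatives
vanish and the Leibniz rule gives `Z(f g) = (Υ(Z) f) g + f (Z g)`; on the other hand `fW`
acts on functions as `f` times `W`. Subtracting the two halves of the bracket gives the identity.
-/

section Leibniz

variable {𝕜 E F : Type*} [NontriviallyNormedField 𝕜] [NormedAddCommGroup E] [NormedSpace 𝕜 E]
  [NormedAddCommGroup F] [NormedSpace 𝕜 F]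

theorem fderiv_comp_fst_apply {f : E → 𝕜} {p : E × F} (hf : DifferentiableAt 𝕜 f p.1)
    (v : E × F) : fderiv 𝕜 (fun q : E × F => f q.1) p v = fderiv 𝕜 f p.1 v.1 := by
  rw [show (fun q : E × F => f q.1) = f ∘ Prod.fst from rfl,
    fderiv_comp p hf differentiableAt_fst, fderiv_fst]
  rfl

theorem fderiv_mul_apply {g h : E → 𝕜} {p : E} (hg : DifferentiableAt 𝕜 g p)
    (hh : DifferentiableAt 𝕜 h p) (v : E) :
    fderiv 𝕜 (fun q => g q * h q) p v = fderiv 𝕜 g p v * h p + g p * fderiv 𝕜 h p v := by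
  rw [fderiv_fun_mul hg hh]
  simp only [add_apply, smul_apply, smul_eq_mul]
  ring

end Leibniz

section Coordinates

variable {n m : ℕ} {f : (Fin n → ℂ) → ℂ} {g : TotE n m → ℂ} {p : TotE n m}

theorem pdz_base_mul (hf : DifferentiableAt ℂ f p.1) (hg : DifferentiableAt ℂ g p) (j : Fin n) :
    pdz j (fun q => f q.1 * g q) p = pd j f p.1 * g p + f p.1 * pdz j g p := by
  rw [pdz, fderiv_mul_apply (g := fun q => f q.1) (hf.comp p differentiableAt_fst) hg,
    fderiv_comp_fst_apply hf]
  rfl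

theorem pdu_base_mul (hf : DifferentiableAt ℂ f p.1) (hg : DifferentiableAt ℂ g p) (β : Fin m) :
    pdu β (fun q => f q.1 * g q) p = f p.1 * pdu β g p := by
  rw [pdu, fderiv_mul_apply (g := fun q => f q.1) (hf.comp p differentiableAt_fst) hg,
    fderiv_comp_fst_apply hf]
  simp [pdu]

theorem act_base_mul (X : VFE n m) (hf : DifferentiableAt ℂ f p.1)
    (hg : DifferentiableAt ℂ g p) :
    act X (fun q => f q.1 * g q) p
      = (∑ k, X.z k p * pd k f p.1) * g p + f p.1 * act X g p := by
  simp only [act, pdz_base_mul hf hg, pdu_base_mul hf hg]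
  rw [Finset.sum_mul, mul_add, Finset.mul_sum, Finset.mul_sum, ← add_assoc,
    ← Finset.sum_add_distrib]
  congr 1 <;> exact Finset.sum_congr rfl fun _ _ => by ring

theorem act_mul_left (c : TotE n m → ℂ) (X : VFE n m) (g : TotE n m → ℂ) (p : TotE n m) :
    act ⟨fun i q => c q * X.z i q, fun α q => c q * X.u α q⟩ g p = c p * act X g p := by
  simp only [act, mul_add, Finset.mul_sum, mul_assoc]

end Coordinates

theorem stmt_3_general {n m : ℕ} (Z W : VFE n m) (f : (Fin n → ℂ) → ℂ)
    (hWz : ∀ i, ContDiff ℂ ⊤ (W.z i)) (hWu : ∀ α, ContDiff ℂ ⊤ (W.u α))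
    (hf : ContDiff ℂ ⊤ f) :
    let fE : TotE n m → ℂ := fun p => f p.1
    let fW : VFE n m := ⟨fun i p => fE p * W.z i p, fun α p => fE p * W.u α p⟩
    let Υf : TotE n m → ℂ := fun p => ∑ k, Z.z k p * pd k f p.1
    (∀ i p, brkz Z fW i p = fE p * brkz Z W i p + Υf p * W.z i p) ∧
    (∀ α p, brku Z fW α p = fE p * brku Z W α p + Υf p * W.u α p) := by
  intro fE fW Υf
  have hf' (p : TotE n m) : DifferentiableAt ℂ f p.1 := hf.differentiable (by simp) _
  refine ⟨fun i p => ?_, fun α p => ?_⟩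
  · have hg := (hWz i).differentiable (by simp) p
    rw [brkz, brkz, act_base_mul Z (hf' p) hg, act_mul_left]
    ring
  · have hg := (hWu α).differentiable (by simp) p
    rw [brku, brku, act_base_mul Z (hf' p) hg, act_mul_left]
    ring

/-- For sections `Z, W` of `T'E` and a function `f` on the base `M`
(so `∂f/∂u^α = 0`), with `Υ(Z)f = Z^k ∂f/∂zᵏ`, one has
`[Z, fW] = f[Z,W] + (Υ(Z)f)·W`; hence `Υ` anchors a Lie algebroid structure on `T'E`. -/
theorem stmt_3 {n m : ℕ} (Z W : VFE n m) (f : (Fin n → ℂ) → ℂ)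
    (hZz : ∀ i, ContDiff ℂ ⊤ (Z.z i)) (hZu : ∀ α, ContDiff ℂ ⊤ (Z.u α))
    (hWz : ∀ i, ContDiff ℂ ⊤ (W.z i)) (hWu : ∀ α, ContDiff ℂ ⊤ (W.u α))
    (hf : ContDiff ℂ ⊤ f) :
    let fE : TotE n m → ℂ := fun p => f p.1
    let fW : VFE n m := ⟨fun i p => fE p * W.z i p, fun α p => fE p * W.u α p⟩
    let Υf : TotE n m → ℂ := fun p => ∑ k, Z.z k p * pd k f p.1
    (∀ i p, brkz Z fW i p = fE p * brkz Z W i p + Υf p * W.z i p) ∧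
    (∀ α p, brku Z fW α p = fE p * brku Z W α p + Υf p * W.u α p) :=
  stmt_3_general Z W f hWz hWu hf

end
end

section
/- If N^β_k(z,u) are the coefficients of a nonlinear connection on T'E (transforming by (∂z̃ᵏ/∂zʰ) Ñ^α_k = M^α_β N^β_h − (∂M^α_β/∂zʰ) u^β), then the functions N^β_α := ρᵏ_α N^β_k transform by M^β_α Ñ^γ_β = M^γ_β N^β_α − ρᵏ_α (∂M^γ_β/∂zᵏ) u^β, i.e., they define a nonlinear connection on the prolongation 𝒯'E; moreover ρ_𝒯(δ_α) = ρᵏ_α δ/δzᵏ, where δ_α = 𝒵_α − N^β_α 𝒱_β and δ/δzᵏ = ∂/∂zᵏ − N^α_k ∂/∂u^α. -/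
open scoped BigOperators

noncomputable section

/-- Auxiliary: reorder a quadruple sum. -/
lemma perm4_aux {ι κ : Type*} [Fintype ι] [Fintype κ] (f : ι → κ → ι → κ → ℂ) :
    ∑ β, ∑ k, ∑ δ, ∑ h, f β k δ h = ∑ δ, ∑ h, ∑ k, ∑ β, f β k δ h :=
  calc ∑ β, ∑ k, ∑ δ, ∑ h, f β k δ h
      = ∑ k, ∑ β, ∑ δ, ∑ h, f β k δ h := Finset.sum_comm
    _ = ∑ k, ∑ δ, ∑ β, ∑ h, f β k δ h :=
        Finset.sum_congr rfl fun k _ => Finset.sum_comm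
    _ = ∑ k, ∑ δ, ∑ h, ∑ β, f β k δ h :=
        Finset.sum_congr rfl fun k _ => Finset.sum_congr rfl fun δ _ => Finset.sum_comm
    _ = ∑ δ, ∑ k, ∑ h, ∑ β, f β k δ h := Finset.sum_comm
    _ = ∑ δ, ∑ h, ∑ k, ∑ β, f β k δ h :=
        Finset.sum_congr rfl fun δ _ => Finset.sum_comm

/-- If `N^β_k` are nonlinear connection coefficients on `T'E`
(transforming by `(∂z̃ᵏ/∂zʰ)Ñ^α_k = M^α_β N^β_h − (∂M^α_β/∂zʰ)u^β`), then
`N^β_α := ρᵏ_α N^β_k` transforms by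
`M^β_α Ñ^γ_β = M^γ_β N^β_α − ρᵏ_α (∂M^γ_β/∂zᵏ) u^β`, so it defines a nonlinear
connection on `𝒯'E`; moreover `ρ_𝒯(δ_α) = ρᵏ_α δ/δzᵏ` componentwise. -/
theorem stmt_12 {n m : ℕ}
    (φ : (Fin n → ℂ) → (Fin n → ℂ))
    (Mm W : Fin m → Fin m → (Fin n → ℂ) → ℂ)
    (ρ ρt : Fin m → Fin n → (Fin n → ℂ) → ℂ)
    (N Nt : Fin m → Fin n → TotE n m → ℂ)
    (hMW : ∀ z α γ, ∑ β, Mm α β z * W β γ z = if α = γ then 1 else 0)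
    (hWM : ∀ z α γ, ∑ β, W α β z * Mm β γ z = if α = γ then 1 else 0)
    (hρ : ∀ α k z, ρt α k (φ z)
        = ∑ β, ∑ h, W β α z * ρ β h z * pd h (fun w => φ w k) z)
    (hN : ∀ α h z (u : Fin m → ℂ),
        ∑ k, pd h (fun w => φ w k) z * Nt α k (φ z, fun β => ∑ γ, Mm β γ z * u γ)
          = (∑ β, Mm α β z * N β h (z, u)) - ∑ β, pd h (Mm α β) z * u β) :
    -- (a) transformation rule of N^β_α := ρᵏ_α N^β_k
    (∀ γ α z (u : Fin m → ℂ),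
      ∑ β, Mm β α z * (∑ k, ρt β k (φ z) * Nt γ k (φ z, fun δ => ∑ ε, Mm δ ε z * u ε))
        = (∑ β, Mm γ β z * (∑ k, ρ α k z * N β k (z, u)))
          - ∑ k, ∑ β, ρ α k z * pd k (Mm γ β) z * u β) ∧
    -- (b) ρ_𝒯(δ_α) = ρᵏ_α δ/δzᵏ : the ∂/∂zᵏ- and ∂/∂u^β-components agree
    (∀ α (p : TotE n m),
      (∀ k, ρ α k p.1 = ∑ k', ρ α k' p.1 * (if k = k' then 1 else 0)) ∧
      (∀ β, -(∑ k, ρ α k p.1 * N β k p) = ∑ k, ρ α k p.1 * (-(N β k p)))) := by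
  constructor
  · intro γ α z u
    have step1 :
        ∑ β, Mm β α z * (∑ k, ρt β k (φ z) * Nt γ k (φ z, fun δ => ∑ ε, Mm δ ε z * u ε))
          = ∑ h, ρ α h z *
              (∑ k, pd h (fun w => φ w k) z * Nt γ k (φ z, fun δ => ∑ ε, Mm δ ε z * u ε)) := by
      have expand :
          ∑ β, Mm β α z * (∑ k, ρt β k (φ z) * Nt γ k (φ z, fun δ => ∑ ε, Mm δ ε z * u ε))
            = ∑ δ, ∑ h, (∑ β, W δ β z * Mm β α z) *
                (ρ δ h z * ∑ k, pd h (fun w => φ w k) z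
                  * Nt γ k (φ z, fun δ => ∑ ε, Mm δ ε z * u ε)) := by
        simp only [hρ, Finset.sum_mul, Finset.mul_sum]
        rw [perm4_aux (fun β k δ h =>
          Mm β α z * (W δ β z * ρ δ h z * pd h (fun w => φ w k) z
            * Nt γ k (φ z, fun δ => ∑ ε, Mm δ ε z * u ε)))]
        refine Finset.sum_congr rfl fun δ _ => Finset.sum_congr rfl fun h _ =>
          Finset.sum_congr rfl fun k _ => Finset.sum_congr rfl fun β _ => ?_
        ring
      rw [expand]
      simp only [hWM]
      simp [Finset.mul_sum]
    rw [step1]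
    simp only [hN, mul_sub, Finset.sum_sub_distrib]
    congr 1
    · calc ∑ h, ρ α h z * ∑ β, Mm γ β z * N β h (z, u)
          = ∑ h, ∑ β, ρ α h z * (Mm γ β z * N β h (z, u)) := by
            simp [Finset.mul_sum]
        _ = ∑ β, ∑ h, ρ α h z * (Mm γ β z * N β h (z, u)) := Finset.sum_comm
        _ = ∑ β, Mm γ β z * ∑ k, ρ α k z * N β k (z, u) := by
            refine Finset.sum_congr rfl fun β _ => ?_
            rw [Finset.mul_sum]
            exact Finset.sum_congr rfl fun h _ => by ring
    · refine Finset.sum_congr rfl fun k _ => ?_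
      rw [Finset.mul_sum]
      exact Finset.sum_congr rfl fun β _ => by ring
  · intro α p
    exact ⟨fun k => by simp, fun β => by simp [mul_neg]⟩

end
end

section
/- Case rank ρ = m = n: if N^α_k(z,u) are nonlinear connection coefficients on E and δ/δzᵏ = ∂/∂zᵏ − N^α_k ∂/∂u^α, then the pushforward under ρ_* gives δ*/δzᵏ = ∂/∂zᵏ − *N^h_k ∂/∂ηʰ with *N^h_k(z,η) = ρʰ_α N^α_k(z,u) − (∂ρʰ_α/∂zᵏ) u^α, where ηᵏ = u^α ρᵏ_α. Conversely, given N^h_k on T'M, the functions *N^α_k(z,u) = ρ^α_h N^h_k(z,η) − (∂ρ^α_h/∂zᵏ) ηʰ satisfy N^h_k = ρʰ_α *N^α_k − (∂ρʰ_α/∂zᵏ) u^α. -/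
/-!
Part (a) is a rearrangement of sums. For part (b), write `P = (ρʰ_α)` and `Q = (ρ^α_h)` for the
anchor matrix and its inverse. Differentiating `P Q = 1` gives `P ∂Q = -(∂P) Q`, so
`P (Q N - ∂Q η) - ∂P u = N + ∂P (Q η - u) = N`, because `η = P u` and `Q P = 1`.
-/

open scoped BigOperators

noncomputable section

open scoped Matrix

theorem sum_mul_fderiv_eq_neg_of_sum_mul_eq_const {ι 𝕜 E : Type*} [Fintype ι]
    [NontriviallyNormedField 𝕜] [NormedAddCommGroup E] [NormedSpace 𝕜 E]
    {f g : ι → E → 𝕜} {z : E} {c : 𝕜}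
    (hf : ∀ i, DifferentiableAt 𝕜 (f i) z) (hg : ∀ i, DifferentiableAt 𝕜 (g i) z)
    (hc : ∀ w, ∑ i, f i w * g i w = c) (v : E) :
    ∑ i, f i z * fderiv 𝕜 (g i) z v = -∑ i, fderiv 𝕜 (f i) z v * g i z := by
  have hzero : fderiv 𝕜 (fun w => ∑ i, f i w * g i w) z v = 0 := by
    simp [funext hc]
  rw [fderiv_fun_sum (A := fun i w => f i w * g i w) fun i _ => (hf i).mul (hg i)] at hzero
  simp only [fderiv_fun_mul (hf _) (hg _), FunLike.coe_sum, Finset.sum_apply, add_apply,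
    smul_apply, smul_eq_mul, Finset.sum_add_distrib, mul_comm (g _ z)] at hzero
  linear_combination hzero

theorem Matrix.eq_mulVec_sub_of_mul_eq_one {ι R : Type*} [Fintype ι] [DecidableEq ι]
    [CommRing R] {P Q dP dQ : Matrix ι ι R} (hPQ : P * Q = 1) (hQP : Q * P = 1)
    (hd : P * dQ = -(dP * Q)) (t u : ι → R) :
    t = P *ᵥ (Q *ᵥ t - dQ *ᵥ (P *ᵥ u)) - dP *ᵥ u := by
  have hdQ : P *ᵥ (dQ *ᵥ (P *ᵥ u)) = -(dP *ᵥ u) := by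
    rw [mulVec_mulVec, mulVec_mulVec, hd, neg_mul, mul_assoc, hQP, mul_one, neg_mulVec]
  rw [mulVec_sub, hdQ, mulVec_mulVec, hPQ, one_mulVec, sub_neg_eq_add, add_sub_cancel_right]

/-- Case `rank ρ = m = n` (invertible anchor matrix).
(a) The pushforward of `δ/δzᵏ = ∂/∂zᵏ − N^α_k ∂/∂u^α` under `ρ_*` is
`∂/∂zᵏ − *N^h_k ∂/∂ηʰ` with `*N^h_k = ρʰ_α N^α_k − (∂ρʰ_α/∂zᵏ)u^α`.
(b) Conversely, `*N^α_k = ρ^α_h N^h_k − (∂ρ^α_h/∂zᵏ)ηʰ` satisfies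
`N^h_k = ρʰ_α *N^α_k − (∂ρʰ_α/∂zᵏ)u^α`. -/
theorem stmt_16 {n : ℕ}
    (ρ ρinv : Fin n → Fin n → (Fin n → ℂ) → ℂ)   -- ρ α h = ρʰ_α, ρinv h α = ρ^α_h
    (hρ : ∀ α k, ContDiff ℂ ⊤ (ρ α k)) (hρi : ∀ k α, ContDiff ℂ ⊤ (ρinv k α))
    (hinv1 : ∀ z α β, ∑ k, ρ α k z * ρinv k β z = if α = β then 1 else 0)
    (hinv2 : ∀ z k h, ∑ α, ρinv k α z * ρ α h z = if k = h then 1 else 0)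
    (N : Fin n → Fin n → ((Fin n → ℂ) × (Fin n → ℂ)) → ℂ)   -- N^α_k(z,u) on E
    (NT : Fin n → Fin n → ((Fin n → ℂ) × (Fin n → ℂ)) → ℂ)  -- N^h_k(z,η) on T'M
    :
    -- (a) the ∂/∂ηʰ-component of ρ_*(δ/δzᵏ) equals −*N^h_k:
    (∀ z (u : Fin n → ℂ) (k h : Fin n),
      (∑ α, u α * pd k (ρ α h) z) - (∑ α, N α k (z, u) * ρ α h z)
        = -((∑ α, ρ α h z * N α k (z, u)) - ∑ α, pd k (ρ α h) z * u α)) ∧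
    -- (b) the converse formula:
    (∀ z (u : Fin n → ℂ) (h k : Fin n),
      let η : Fin n → ℂ := fun j => ∑ α, u α * ρ α j z
      let Ns : Fin n → Fin n → ℂ := fun α k' =>
        (∑ j, ρinv j α z * NT j k' (z, η)) - ∑ j, pd k' (fun w => ρinv j α w) z * η j
      NT h k (z, η) = (∑ α, ρ α h z * Ns α k) - ∑ α, pd k (ρ α h) z * u α) := by
  refine ⟨fun z u k h => by simp only [neg_sub, mul_comm], fun z u h k => ?_⟩
  intro η Ns
  let P : Matrix (Fin n) (Fin n) ℂ := .of fun h α => ρ α h z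
  let Q : Matrix (Fin n) (Fin n) ℂ := .of fun α j => ρinv j α z
  let dP : Matrix (Fin n) (Fin n) ℂ := .of fun h α => pd k (ρ α h) z
  let dQ : Matrix (Fin n) (Fin n) ℂ := .of fun α j => pd k (ρinv j α) z
  have hPQ : P * Q = 1 := by
    ext h j
    simpa [P, Q, Matrix.mul_apply, Matrix.one_apply, mul_comm, eq_comm] using hinv2 z j h
  have hQP : Q * P = 1 := by
    ext α β
    simpa [P, Q, Matrix.mul_apply, Matrix.one_apply, mul_comm, eq_comm] using hinv1 z β α
  have hd : P * dQ = -(dP * Q) := by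
    ext h j
    simpa [P, Q, dP, dQ, pd, Matrix.mul_apply] using
      sum_mul_fderiv_eq_neg_of_sum_mul_eq_const (f := fun α => ρ α h) (g := fun α => ρinv j α)
        (fun α => (hρ α h).differentiable (by simp) z)
        (fun α => (hρi j α).differentiable (by simp) z)
        (fun w => by simpa only [mul_comm] using hinv2 w j h) (Pi.single k 1)
  have hη : η = P *ᵥ u := funext fun j => by simp [η, P, Matrix.mulVec, dotProduct, mul_comm]
  simpa [Ns, ← hη, P, Q, dP, dQ, Matrix.mulVec, dotProduct] using
    congrFun (Matrix.eq_mulVec_sub_of_mul_eq_one hPQ hQP hd (fun j => NT j k (z, η)) u) h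

end
end
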